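/- arXiv:1904.03467 — 3 statements merged into one kernel-verified Lean document; each statement's English description precedes it below -/
import Mathlib

section
/- The collection of all locally-dense subgraphs of a finite graph can be arranged into a strictly increasing chain B_0 ⊊ B_1 ⊊ ⋯ ⊊ B_k with k ≤ |V|, and moreover the outer densities are strictly decreasing along the chain: d(B_i, B_{i-1}) > d(B_{i+1}, B_i) for 1 ≤ i < k. -/
/-!
If `W` is locally dense and `U` is incomparable with `W`, taking `X = W \ U`, `Y = U \ W` in the
definition gives `d(U, W) < d(W, U)`; so two incomparable locally dense sets contradict each other,
and the locally dense sets (among them `∅`) form a finite chain of finsets. For consecutive members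
`B_{i-1} ⊂ B_i ⊂ B_{i+1}`, local density of `B_i` with `X = B_i \ B_{i-1}`, `Y = B_{i+1} \ B_i`
gives the strict decrease of the outer densities.
-/

open Finset

variable {V : Type*}

/-- Edges of `G` with both endpoints in `X`. -/
def innerEdges [Fintype V] [DecidableEq V] (G : SimpleGraph V) [DecidableRel G.Adj]
    (X : Finset V) : Finset (Sym2 V) :=
  G.edgeFinset.filter (fun e => ∀ v ∈ e, v ∈ X)

/-- Marginal edges `Ẽ(X,Y) = E(X) ∪ E(X,Y)` (for disjoint `X`, `Y`):
edges with both endpoints in `X ∪ Y`, at least one in `X`. -/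
def margEdges [Fintype V] [DecidableEq V] (G : SimpleGraph V) [DecidableRel G.Adj]
    (X Y : Finset V) : Finset (Sym2 V) :=
  G.edgeFinset.filter (fun e => (∀ v ∈ e, v ∈ X ∪ Y) ∧ ∃ v ∈ e, v ∈ X)

/-- Outer density `d(X,Y) = |Ẽ(X \ Y, Y)| / |X \ Y|`. -/
def outDensity [Fintype V] [DecidableEq V] (G : SimpleGraph V) [DecidableRel G.Adj]
    (X Y : Finset V) : ℚ :=
  ((margEdges G (X \ Y) Y).card : ℚ) / ((X \ Y).card : ℚ)

/-- `W` is locally dense: there is no nonempty `X ⊆ W` and nonempty `Y` with `Y ∩ W = ∅`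
such that `d(X, W \ X) ≤ d(Y, W)`. -/
def LocallyDense [Fintype V] [DecidableEq V] (G : SimpleGraph V) [DecidableRel G.Adj]
    (W : Finset V) : Prop :=
  ¬ ∃ X Y : Finset V, X.Nonempty ∧ Y.Nonempty ∧ X ⊆ W ∧ Y ∩ W = ∅ ∧
      outDensity G X (W \ X) ≤ outDensity G Y W

/-- Number of neighbors of `x` in `U`. -/
def degIn [DecidableEq V] (G : SimpleGraph V) [DecidableRel G.Adj] (x : V) (U : Finset V) : ℕ :=
  (U.filter (G.Adj x)).card

theorem IsChain.exists_strictMono_enum {α : Type*} [PartialOrder α] {s : Set α}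
    (hs : IsChain (· ≤ ·) s) (hfin : s.Finite) (hne : s.Nonempty) :
    ∃ (k : ℕ) (B : ℕ → α), (∀ i j, i < j → j ≤ k → B i < B j) ∧ ∀ a, a ∈ s ↔ ∃ i ≤ k, a = B i := by
  classical
  let := hs.linearOrder
  have := hfin.fintype
  have hn : 0 < Fintype.card s := Fintype.card_pos_iff.2 hne.to_subtype
  let e := monoEquivOfFin s rfl
  let idx (i : ℕ) : Fin (Fintype.card s) := ⟨min i (Fintype.card s - 1), by omega⟩
  refine ⟨Fintype.card s - 1, fun i => e (idx i), fun i j hij hjk => ?_, fun a => ⟨fun ha => ?_, ?_⟩⟩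
  · exact e.strictMono (show idx i < idx j from Fin.mk_lt_mk.2 (by omega))
  · refine ⟨e.symm ⟨a, ha⟩, by omega, ?_⟩
    have : idx (e.symm ⟨a, ha⟩) = e.symm ⟨a, ha⟩ := Fin.ext (by simp only [idx]; omega)
    beta_reduce
    rw [this, OrderIso.apply_symm_apply]
  · rintro ⟨i, -, rfl⟩
    exact (e (idx i)).2

theorem Finset.le_card_of_ssubset_chain {α : Type*} {k : ℕ} {B : ℕ → Finset α}
    (hB : ∀ i j, i < j → j ≤ k → B i ⊂ B j) : k ≤ (B k).card := by
  suffices ∀ i ≤ k, i ≤ (B i).card from this k le_rfl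
  intro i
  induction i with
  | zero => exact fun _ => Nat.zero_le _
  | succ i ih =>
    intro hi
    have := card_lt_card (hB i (i + 1) i.lt_succ_self hi)
    have := ih (by omega)
    omega

section OuterDensity

variable [Fintype V] [DecidableEq V] (G : SimpleGraph V) [DecidableRel G.Adj]

lemma margEdges_mono_right {X A B : Finset V} (h : A ⊆ B) : margEdges G X A ⊆ margEdges G X B := by
  intro e he
  simp only [margEdges, mem_filter] at he ⊢
  exact ⟨he.1, fun v hv => union_subset_union_right h (he.2.1 v hv), he.2.2⟩

lemma outDensity_mono_right {X A B : Finset V} (hXB : Disjoint X B) (hAB : A ⊆ B) :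
    outDensity G X A ≤ outDensity G X B := by
  unfold outDensity
  rw [sdiff_eq_self_of_disjoint (hXB.mono_right hAB), sdiff_eq_self_of_disjoint hXB]
  gcongr
  exact margEdges_mono_right G hAB

lemma outDensity_sdiff_left (C B : Finset V) : outDensity G (C \ B) B = outDensity G C B := by
  unfold outDensity
  rw [sdiff_sdiff, sup_idem]

variable {G}

lemma locallyDense_empty : LocallyDense G ∅ := by
  rintro ⟨X, -, hX, -, hXW, -⟩
  exact hX.ne_empty (subset_empty.1 hXW)

lemma LocallyDense.outDensity_lt {W X Y : Finset V} (hW : LocallyDense G W) (hX : X.Nonempty)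
    (hY : Y.Nonempty) (hXW : X ⊆ W) (hYW : Disjoint Y W) :
    outDensity G Y W < outDensity G X (W \ X) :=
  not_le.1 fun h => hW ⟨X, Y, hX, hY, hXW, disjoint_iff_inter_eq_empty.1 hYW, h⟩

lemma LocallyDense.outDensity_lt_of_not_subset {W U : Finset V} (hW : LocallyDense G W)
    (hWU : ¬ W ⊆ U) (hUW : ¬ U ⊆ W) : outDensity G U W < outDensity G W U :=
  calc outDensity G U W = outDensity G (U \ W) W := (outDensity_sdiff_left G U W).symm
    _ < outDensity G (W \ U) (W \ (W \ U)) :=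
      hW.outDensity_lt (sdiff_nonempty.2 hWU) (sdiff_nonempty.2 hUW) sdiff_subset
        sdiff_disjoint
    _ ≤ outDensity G (W \ U) U := by
      refine outDensity_mono_right G sdiff_disjoint ?_
      rw [sdiff_sdiff_right_self]
      exact inf_le_right
    _ = outDensity G W U := outDensity_sdiff_left G W U

lemma isChain_locallyDense : IsChain (· ≤ ·) {W : Finset V | LocallyDense G W} := by
  intro W₁ h₁ W₂ h₂ _
  by_contra! h
  exact lt_asymm (h₁.outDensity_lt_of_not_subset h.1 h.2) (h₂.outDensity_lt_of_not_subset h.2 h.1)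

lemma LocallyDense.outDensity_lt_of_ssubset {A B C : Finset V} (hB : LocallyDense G B)
    (hAB : A ⊂ B) (hBC : B ⊂ C) : outDensity G C B < outDensity G B A :=
  calc outDensity G C B = outDensity G (C \ B) B := (outDensity_sdiff_left G C B).symm
    _ < outDensity G (B \ A) (B \ (B \ A)) :=
      hB.outDensity_lt (sdiff_nonempty.2 hAB.2) (sdiff_nonempty.2 hBC.2) sdiff_subset
        sdiff_disjoint
    _ = outDensity G B A := by
      rw [Finset.sdiff_sdiff_eq_self hAB.1, outDensity_sdiff_left]

end OuterDensity

theorem locallyDense_chain [Fintype V] [DecidableEq V] (G : SimpleGraph V) [DecidableRel G.Adj]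
 :
    ∃ (k : ℕ) (B : ℕ → Finset V),
      k ≤ Fintype.card V ∧
      (∀ i j, i < j → j ≤ k → B i ⊂ B j) ∧
      (∀ W : Finset V, LocallyDense G W ↔ ∃ i ≤ k, W = B i) ∧
      (∀ i, 1 ≤ i → i < k →
        outDensity G (B (i + 1)) (B i) < outDensity G (B i) (B (i - 1))) := by
  obtain ⟨k, B, hB, hmem⟩ :=
    isChain_locallyDense.exists_strictMono_enum (Set.toFinite _) ⟨∅, locallyDense_empty (G := G)⟩
  refine ⟨k, B, (le_card_of_ssubset_chain hB).trans (card_le_univ _), hB, hmem,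
    fun i hi hik => ?_⟩
  have hBi : LocallyDense G (B i) := (hmem _).2 ⟨i, hik.le, rfl⟩
  exact hBi.outDensity_lt_of_ssubset (hB _ _ (by omega) (by omega)) (hB _ _ (by omega) hik)
end

section
/- For any real α ≥ 0, every maximizer U (chosen largest among maximizers) of the function W ↦ |E(W)| − α|W| over W ⊆ V is a locally-dense subgraph. In particular, for every nonempty X ⊆ U we have d(X, U\X) ≥ α, and for every nonempty Y disjoint from U we have d(Y, U) < α. -/
open Finset

variable {V : Type*}

/-!
With `f W = |E(W)| - α |W|`, splitting `U = (U \ X) ∪ X` gives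
`f U = f (U \ X) + |Ẽ(X, U \ X)| - α |X|`, so maximality of `U` forces `d(X, U \ X) ≥ α`.
Likewise `f (Y ∪ U) = f U + |Ẽ(Y, U)| - α |Y|`, and this is `< f U` because `U` is the largest
maximizer, so `d(Y, U) < α`. The two bounds together exclude `d(X, U \ X) ≤ d(Y, U)`.
-/

section

variable [Fintype V] [DecidableEq V] (G : SimpleGraph V) [DecidableRel G.Adj]

def edgeSurplus (α : ℚ) (W : Finset V) : ℚ :=
  (innerEdges G W).card - α * W.card

lemma innerEdges_union_eq (A B : Finset V) :
    innerEdges G (A ∪ B) = innerEdges G B ∪ margEdges G A B := by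
  unfold innerEdges margEdges
  rw [← filter_or]
  refine filter_congr fun e _ => ?_
  induction e using Sym2.ind with
  | _ x y =>
    simp only [Sym2.mem_iff, forall_eq_or_imp, forall_eq, exists_eq_or_imp, exists_eq_left,
      mem_union]
    tauto

lemma card_innerEdges_union {A B : Finset V} (hAB : Disjoint A B) :
    (innerEdges G (A ∪ B)).card = (innerEdges G B).card + (margEdges G A B).card := by
  rw [innerEdges_union_eq, card_union_of_disjoint]
  refine disjoint_left.mpr fun e heB heA => ?_
  obtain ⟨v, hv, hvA⟩ := (mem_filter.mp heA).2.2
  exact disjoint_left.mp hAB hvA ((mem_filter.mp heB).2 v hv)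

lemma edgeSurplus_union {A B : Finset V} (hAB : Disjoint A B) (α : ℚ) :
    edgeSurplus G α (A ∪ B) = edgeSurplus G α B + ((margEdges G A B).card - α * A.card) := by
  simp only [edgeSurplus, card_innerEdges_union G hAB, card_union_of_disjoint hAB]
  push_cast
  ring

lemma outDensity_of_disjoint {X Y : Finset V} (hXY : Disjoint X Y) :
    outDensity G X Y = (margEdges G X Y).card / X.card := by
  rw [outDensity, sdiff_eq_self_of_disjoint hXY]

lemma le_outDensity_sdiff_of_maximizer {α : ℚ} {U X : Finset V}
    (hmax : ∀ W, edgeSurplus G α W ≤ edgeSurplus G α U) (hX : X.Nonempty) (hXU : X ⊆ U) :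
    α ≤ outDensity G X (U \ X) := by
  have hsplit := edgeSurplus_union G (disjoint_sdiff (s := X) (t := U)) α
  rw [union_sdiff_of_subset hXU] at hsplit
  rw [outDensity_of_disjoint G disjoint_sdiff, le_div_iff₀ (by exact_mod_cast hX.card_pos)]
  linarith [hmax (U \ X)]

lemma outDensity_lt_of_maximizer {α : ℚ} {U Y : Finset V}
    (hmax : ∀ W, edgeSurplus G α W ≤ edgeSurplus G α U)
    (hbig : ∀ W, edgeSurplus G α W = edgeSurplus G α U → W ⊆ U)
    (hY : Y.Nonempty) (hYU : Disjoint Y U) :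
    outDensity G Y U < α := by
  have hsplit := edgeSurplus_union G hYU α
  have hne : edgeSurplus G α (Y ∪ U) ≠ edgeSurplus G α U := fun h =>
    have ⟨y, hy⟩ := hY
    disjoint_left.mp hYU hy (hbig _ h (mem_union_left U hy))
  rw [outDensity_of_disjoint G hYU, div_lt_iff₀ (by exact_mod_cast hY.card_pos)]
  linarith [lt_of_le_of_ne (hmax (Y ∪ U)) hne]

end

theorem maximizer_is_locallyDense_general [Fintype V] [DecidableEq V] (G : SimpleGraph V) [DecidableRel G.Adj]
    (α : ℚ) (U : Finset V)
    (hmax : ∀ W : Finset V,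
      ((innerEdges G W).card : ℚ) - α * W.card ≤ ((innerEdges G U).card : ℚ) - α * U.card)
    (hbig : ∀ W : Finset V,
      ((innerEdges G W).card : ℚ) - α * W.card = ((innerEdges G U).card : ℚ) - α * U.card →
      W ⊆ U) :
    LocallyDense G U ∧
    (∀ X : Finset V, X.Nonempty → X ⊆ U → α ≤ outDensity G X (U \ X)) ∧
    (∀ Y : Finset V, Y.Nonempty → Y ∩ U = ∅ → outDensity G Y U < α) := by
  have inner : ∀ X : Finset V, X.Nonempty → X ⊆ U → α ≤ outDensity G X (U \ X) :=
    fun X hX hXU => le_outDensity_sdiff_of_maximizer G hmax hX hXU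
  have outer : ∀ Y : Finset V, Y.Nonempty → Y ∩ U = ∅ → outDensity G Y U < α :=
    fun Y hY hYU => outDensity_lt_of_maximizer G hmax hbig hY (disjoint_iff_inter_eq_empty.mpr hYU)
  refine ⟨?_, inner, outer⟩
  rintro ⟨X, Y, hX, hY, hXU, hYU, hle⟩
  exact (inner X hX hXU).trans hle |>.not_gt (outer Y hY hYU)

theorem maximizer_is_locallyDense [Fintype V] [DecidableEq V] (G : SimpleGraph V) [DecidableRel G.Adj]
    (α : ℚ) (hα : 0 ≤ α) (U : Finset V)
    (hmax : ∀ W : Finset V,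
      ((innerEdges G W).card : ℚ) - α * W.card ≤ ((innerEdges G U).card : ℚ) - α * U.card)
    (hbig : ∀ W : Finset V,
      ((innerEdges G W).card : ℚ) - α * W.card = ((innerEdges G U).card : ℚ) - α * U.card →
      W ⊆ U) :
    LocallyDense G U ∧
    (∀ X : Finset V, X.Nonempty → X ⊆ U → α ≤ outDensity G X (U \ X)) ∧
    (∀ Y : Finset V, Y.Nonempty → Y ∩ U = ∅ → outDensity G Y U < α) :=
  maximizer_is_locallyDense_general G α U hmax hbig
end

section
/- Profile 2-approximation of the k-core decomposition: let B = (∅ = B_0 ⊊ ⋯ ⊊ B_k = V) be the chain of locally-dense subgraphs and C = (∅ = C_0 ⊊ ⋯ ⊊ C_l = V) the chain of all k-cores of G. Then for every index i with 1 ≤ i ≤ |V|, prof(i; C) ≥ prof(i; B)/2. -/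
open Finset

variable {V : Type*}

/-- `C` is the `k`-core of `G`: every vertex of `C` has at least `k` neighbors in `C`,
and `C` contains every set with this minimum-degree property. -/
def IsKCore [DecidableEq V] (G : SimpleGraph V) [DecidableRel G.Adj]
    (k : ℕ) (C : Finset V) : Prop :=
  (∀ v ∈ C, k ≤ degIn G v C) ∧ ∀ D : Finset V, (∀ v ∈ D, k ≤ degIn G v D) → D ⊆ C

/-
The count `e X` of edges inside `X` is supermodular, and local density only depends on that.
For consecutive members `P ⊂ W` of the chain of locally dense sets, let `D` be the largest
marginal density `(e T - e P) / |T \ P|` over `P ⊂ T ⊆ W` and `U` the largest set attaining it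
(attaining sets are closed under union by supermodularity). Every outside set has marginal
density `< D` over `U`, and every `X ⊆ U` has `d(X, U \ X) ≥ D`, so `U` is locally dense and hence
`U = W`. Taking singletons `X = {v}` shows that `B_j` has minimum degree `≥ d(B_j, B_{j-1})`.

So `B_j` lies in the `⌈d⌉`-core, which contains the core `C_{j'}` reached at the same size `i`;
comparing `C_{j'}` with the `⌈d⌉`-core forces minimum degree `≥ ⌈d⌉` on `C_{j'}`, and by double
counting its marginal density is at least half its minimum degree.
-/

lemma card_sub_card_pos {P W : Finset V} (h : P ⊂ W) : (0 : ℚ) < #W - #P :=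
  sub_pos.2 (by exact_mod_cast card_lt_card h)

section Supermodular

variable [DecidableEq V] (f : Finset V → ℚ)

def IsSupermodular : Prop :=
  ∀ A B : Finset V, f A + f B ≤ f (A ∪ B) + f (A ∩ B)

def marginalDensity (X Y : Finset V) : ℚ :=
  (f (X ∪ Y) - f Y) / #(X \ Y)

def IsLocallyDense (W : Finset V) : Prop :=
  ∀ X Y : Finset V, X.Nonempty → Y.Nonempty → X ⊆ W → Disjoint Y W →
    marginalDensity f Y W < marginalDensity f X (W \ X)

variable {f}

lemma marginalDensity_sdiff_self {X W : Finset V} (h : X ⊆ W) :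
    marginalDensity f X (W \ X) = (f W - f (W \ X)) / #X := by
  rw [marginalDensity, union_sdiff_of_subset h, sdiff_eq_self_of_disjoint disjoint_sdiff]

lemma marginalDensity_of_disjoint {Y W : Finset V} (h : Disjoint Y W) :
    marginalDensity f Y W = (f (Y ∪ W) - f W) / #Y := by
  rw [marginalDensity, sdiff_eq_self_of_disjoint h]

lemma marginalDensity_sdiff_left (X Y : Finset V) :
    marginalDensity f (X \ Y) Y = marginalDensity f X Y := by
  rw [marginalDensity, marginalDensity, sdiff_union_self_eq_union, Finset.sdiff_idem]

lemma marginalDensity_of_subset {P W : Finset V} (h : P ⊆ W) :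
    marginalDensity f W P = (f W - f P) / (#W - #P) := by
  rw [marginalDensity, union_eq_left.2 h, card_sdiff_of_subset h, Nat.cast_sub (card_le_card h)]

/-- `T ↦ f T - D * #T` is again supermodular, as `#` is modular. -/
lemma excess_union_eq {P T₁ T₂ : Finset V} {D : ℚ}
    (hf : IsSupermodular f)
    (hD : f (T₁ ∪ T₂) - D * #(T₁ ∪ T₂) ≤ f P - D * #P)
    (hD' : f (T₁ ∩ T₂) - D * #(T₁ ∩ T₂) ≤ f P - D * #P)
    (h₁ : f T₁ - D * #T₁ = f P - D * #P) (h₂ : f T₂ - D * #T₂ = f P - D * #P) :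
    f (T₁ ∪ T₂) - D * #(T₁ ∪ T₂) = f P - D * #P := by
  have hcard : (#(T₁ ∪ T₂) : ℚ) + #(T₁ ∩ T₂) = #T₁ + #T₂ := by
    exact_mod_cast card_union_add_card_inter _ _
  have := congrArg (D * ·) hcard
  simp only [mul_add] at this
  linarith [hf T₁ T₂]

/-- `D` is the largest marginal density `marginalDensity f T P` over `P ⊂ T ⊆ W`, encoded as
`T ↦ f T - D * #T` being maximal at `P`; `U` is the greatest set attaining it. -/
lemma exists_greatest_densest (hf : IsSupermodular f)
    {P W : Finset V} (hPW : P ⊂ W) :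
    ∃ (D : ℚ) (U : Finset V), (∀ T, P ⊆ T → T ⊆ W → f T - D * #T ≤ f P - D * #P) ∧
      P ⊂ U ∧ U ⊆ W ∧ f U - D * #U = f P - D * #P ∧
      ∀ T, P ⊆ T → T ⊆ W → f T - D * #T = f P - D * #P → T ⊆ U := by
  obtain ⟨T₀, hT₀, hT₀max⟩ := exists_max_image (W.powerset.filter (P ⊂ ·))
    (fun T => marginalDensity f T P) ⟨W, by simpa using hPW⟩
  simp only [mem_filter, mem_powerset] at hT₀ hT₀max
  set D := marginalDensity f T₀ P
  have hD : ∀ T, P ⊆ T → T ⊆ W → f T - D * #T ≤ f P - D * #P := by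
    intro T hPT hTW
    obtain rfl | hPT := hPT.eq_or_ssubset
    · rfl
    have := hT₀max T ⟨hTW, hPT⟩
    rw [marginalDensity_of_subset hPT.subset, div_le_iff₀ (card_sub_card_pos hPT)] at this
    linarith
  have hT₀D : f T₀ - D * #T₀ = f P - D * #P := by
    have hpos := card_sub_card_pos hT₀.2
    have : D * (#T₀ - #P) = f T₀ - f P := by
      simp only [D, marginalDensity_of_subset hT₀.2.subset]
      field_simp
    linarith
  obtain ⟨U, hU, hUmax⟩ := exists_max_image
    (W.powerset.filter (fun T => P ⊆ T ∧ f T - D * #T = f P - D * #P)) card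
    ⟨T₀, by simpa [hT₀.1, hT₀.2.subset] using hT₀D⟩
  simp only [mem_filter, mem_powerset] at hU hUmax
  have hgreatest : ∀ T, P ⊆ T → T ⊆ W → f T - D * #T = f P - D * #P → T ⊆ U := by
    intro T hPT hTW hT
    have hunion := excess_union_eq hf
      (hD _ (hPT.trans subset_union_left) (union_subset hTW hU.1))
      (hD _ (subset_inter hPT hU.2.1) (inter_subset_left.trans hTW)) hT hU.2.2
    have := hUmax (T ∪ U) ⟨union_subset hTW hU.1, hPT.trans subset_union_left, hunion⟩
    exact subset_union_left.trans (eq_of_subset_of_card_le subset_union_right this).symm.subset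
  exact ⟨D, U, hD, hT₀.2.trans_subset (hgreatest T₀ hT₀.2.subset hT₀.1 hT₀D), hU.1, hU.2.2,
    hgreatest⟩

/-- The part of `X` outside `P` is bounded by the maximality of `D`, the part inside `P` by the
local density of `P` tested against `U \ P`, whose marginal density is `D`. -/
lemma mul_card_le_sub_of_densest (hf : IsSupermodular f)
    {P U X : Finset V} {D : ℚ} (hP : IsLocallyDense f P) (hPU : P ⊂ U)
    (hD : ∀ T, P ⊆ T → T ⊆ U → f T - D * #T ≤ f P - D * #P)
    (hU : f U - D * #U = f P - D * #P) (hXU : X ⊆ U) :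
    D * #X ≤ f U - f (U \ X) := by
  have hcard : (#X : ℚ) = #(X \ P) + #(X ∩ P) := by
    exact_mod_cast (card_sdiff_add_card_inter X P).symm
  have hout : D * #(X \ P) ≤ f U - f (U \ (X \ P)) := by
    have hcard' : (#(U \ (X \ P)) : ℚ) + #(X \ P) = #U := by
      exact_mod_cast card_sdiff_add_card_eq_card (sdiff_subset.trans hXU)
    have := hD (U \ (X \ P))
      (fun x hx => mem_sdiff.2 ⟨hPU.subset hx, fun h => (mem_sdiff.1 h).2 hx⟩) sdiff_subset
    rw [← hcard'] at hU
    linarith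
  have hin : D * #(X ∩ P) ≤ f P - f (P \ (X ∩ P)) := by
    obtain hempty | hne := (X ∩ P).eq_empty_or_nonempty
    · simp [hempty]
    have hdens : (f U - f P) / (#U - #P) = D := by
      rw [div_eq_iff (card_sub_card_pos hPU).ne']
      linarith
    have := hP _ _ hne (sdiff_nonempty.2 hPU.not_subset) inter_subset_right sdiff_disjoint
    rw [marginalDensity_sdiff_left, marginalDensity_sdiff_self inter_subset_right,
      marginalDensity_of_subset hPU.subset, hdens,
      lt_div_iff₀ (by exact_mod_cast card_pos.2 hne)] at this
    exact this.le
  have hPU' : ∀ x, x ∈ P → x ∈ U := fun _ hx => hPU.subset hx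
  have hunion : P ∪ U \ X = U \ (X \ P) := by
    ext x; have := hPU' x; simp only [mem_union, mem_sdiff]; tauto
  have hinter : P ∩ (U \ X) = P \ (X ∩ P) := by
    ext x; have := hPU' x; simp only [mem_inter, mem_sdiff]; tauto
  have hsup := hf P (U \ X)
  rw [hunion, hinter] at hsup
  rw [hcard]
  linarith

/-- The part of `Y` inside `W` is bounded strictly because `U` is the greatest densest set, the
part outside `W` by the local density of `W` tested against `W \ P`. -/
lemma sub_lt_mul_card_of_greatest_densest (hf : IsSupermodular f)
    {P U W Y : Finset V} {D : ℚ} (hW : IsLocallyDense f W) (hPW : P ⊂ W) (hPU : P ⊆ U)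
    (hUW : U ⊆ W) (hD : ∀ T, P ⊆ T → T ⊆ W → f T - D * #T ≤ f P - D * #P)
    (hU : f U - D * #U = f P - D * #P)
    (hgreatest : ∀ T, P ⊆ T → T ⊆ W → f T - D * #T = f P - D * #P → T ⊆ U)
    (hY : Y.Nonempty) (hYU : Disjoint Y U) : f (Y ∪ U) - f U < D * #Y := by
  have hcard : (#Y : ℚ) = #(Y ∩ W) + #(Y \ W) := by
    exact_mod_cast (card_inter_add_card_sdiff Y W).symm
  have hY₁U : Disjoint (Y ∩ W) U := hYU.mono_left inter_subset_left
  have hPY₁U : P ⊆ Y ∩ W ∪ U := hPU.trans subset_union_right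
  have hY₁UW : Y ∩ W ∪ U ⊆ W := union_subset inter_subset_right hUW
  have hcardU : (#(Y ∩ W ∪ U) : ℚ) = #(Y ∩ W) + #U := by
    exact_mod_cast card_union_of_disjoint hY₁U
  have hin : f (Y ∩ W ∪ U) - f U ≤ D * #(Y ∩ W) := by
    have := hD _ hPY₁U hY₁UW
    rw [hcardU] at this
    linarith
  have hin_ne : (Y ∩ W).Nonempty → f (Y ∩ W ∪ U) - f U ≠ D * #(Y ∩ W) := by
    rintro ⟨y, hy⟩ heq
    have := hgreatest _ hPY₁U hY₁UW (by rw [hcardU]; linarith)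
    exact disjoint_left.1 hY₁U hy (this (mem_union_left _ hy))
  have hout : (Y \ W).Nonempty → f (Y \ W ∪ W) - f W < D * #(Y \ W) := by
    intro hne
    have hWD : (f W - f P) / (#W - #P) ≤ D := by
      rw [div_le_iff₀ (card_sub_card_pos hPW)]
      linarith [hD W hPW.subset subset_rfl]
    have := hW (W \ P) (Y \ W) (sdiff_nonempty.2 hPW.not_subset) hne sdiff_subset sdiff_disjoint
    rw [marginalDensity_of_disjoint sdiff_disjoint, Finset.sdiff_sdiff_eq_self hPW.subset,
      marginalDensity_sdiff_left, marginalDensity_of_subset hPW.subset] at this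
    rw [← div_lt_iff₀ (by exact_mod_cast card_pos.2 hne)]
    linarith
  have hsup := hf (Y ∪ U) W
  rw [show Y ∪ U ∪ W = Y \ W ∪ W by
      rw [union_assoc, union_eq_right.2 hUW, sdiff_union_self_eq_union],
    show (Y ∪ U) ∩ W = Y ∩ W ∪ U by rw [union_inter_distrib_right, inter_eq_left.2 hUW]] at hsup
  rw [hcard]
  obtain hempty | hne := (Y \ W).eq_empty_or_nonempty
  · have hYW : Y ∩ W = Y := inter_eq_left.2 (sdiff_eq_empty_iff_subset.1 hempty)
    have := lt_of_le_of_ne hin (hin_ne (hYW.symm ▸ hY))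
    rw [hempty, empty_union] at hsup
    rw [hempty, card_empty, Nat.cast_zero]
    linarith
  · linarith [hout hne]

theorem marginalDensity_le_of_isLocallyDense (hf : IsSupermodular f) {P W X : Finset V}
    (hP : IsLocallyDense f P) (hW : IsLocallyDense f W) (hPW : P ⊂ W)
    (hgap : ∀ U, P ⊂ U → U ⊂ W → ¬ IsLocallyDense f U) (hXW : X ⊆ W) (hX : X.Nonempty) :
    marginalDensity f W P ≤ marginalDensity f X (W \ X) := by
  obtain ⟨D, U, hD, hPU, hUW, hU, hgreatest⟩ := exists_greatest_densest hf hPW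
  have hDU : ∀ T, P ⊆ T → T ⊆ U → f T - D * #T ≤ f P - D * #P :=
    fun T hPT hTU => hD T hPT (hTU.trans hUW)
  have hUdense : IsLocallyDense f U := by
    intro X Y hX hY hXU hYU
    rw [marginalDensity_of_disjoint hYU, marginalDensity_sdiff_self hXU]
    calc (f (Y ∪ U) - f U) / #Y < D := by
          rw [div_lt_iff₀ (by exact_mod_cast card_pos.2 hY)]
          exact sub_lt_mul_card_of_greatest_densest hf hW hPW hPU.subset hUW hD hU hgreatest hY hYU
      _ ≤ (f U - f (U \ X)) / #X := by
          rw [le_div_iff₀ (by exact_mod_cast card_pos.2 hX)]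
          exact mul_card_le_sub_of_densest hf hP hPU hDU hU hXU
  obtain rfl : U = W := by
    by_contra hne
    exact hgap U hPU (ssubset_of_subset_of_ne hUW hne) hUdense
  calc marginalDensity f U P = D := by
        rw [marginalDensity_of_subset hPU.subset, div_eq_iff (card_sub_card_pos hPU).ne']
        linarith
    _ ≤ marginalDensity f X (U \ X) := by
        rw [marginalDensity_sdiff_self hXW, le_div_iff₀ (by exact_mod_cast card_pos.2 hX)]
        exact mul_card_le_sub_of_densest hf hP hPU hDU hU hXW

end Supermodular

section Graph

variable [Fintype V] [DecidableEq V] (G : SimpleGraph V) [DecidableRel G.Adj]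

def edgeCount (X : Finset V) : ℚ :=
  #(innerEdges G X)

lemma innerEdges_mono {A B : Finset V} (h : A ⊆ B) : innerEdges G A ⊆ innerEdges G B :=
  monotone_filter_right _ fun _ _ hA v hv => h (hA v hv)

lemma isSupermodular_edgeCount : IsSupermodular (edgeCount G) := by
  intro A B
  have hinter : innerEdges G (A ∩ B) = innerEdges G A ∩ innerEdges G B := by
    simp only [innerEdges, ← filter_and, mem_inter, forall_and]
  have hunion : innerEdges G A ∪ innerEdges G B ⊆ innerEdges G (A ∪ B) :=
    union_subset (innerEdges_mono G subset_union_left) (innerEdges_mono G subset_union_right)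
  simp only [edgeCount, hinter]
  exact_mod_cast (card_union_add_card_inter _ _).symm.le.trans
    (Nat.add_le_add_right (card_le_card hunion) _)

lemma margEdges_sdiff (X Y : Finset V) :
    margEdges G (X \ Y) Y = innerEdges G (X ∪ Y) \ innerEdges G Y := by
  ext e
  simp only [margEdges, innerEdges, mem_filter, mem_sdiff, mem_union]
  grind

lemma outDensity_eq_marginalDensity (X Y : Finset V) :
    outDensity G X Y = marginalDensity (edgeCount G) X Y := by
  have h := innerEdges_mono G (subset_union_right (s₁ := X) (s₂ := Y))
  rw [outDensity, marginalDensity, margEdges_sdiff, card_sdiff_of_subset h,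
    Nat.cast_sub (card_le_card h), edgeCount, edgeCount]

lemma locallyDense_iff_isLocallyDense (W : Finset V) :
    LocallyDense G W ↔ IsLocallyDense (edgeCount G) W := by
  simp only [LocallyDense, IsLocallyDense, outDensity_eq_marginalDensity,
    ← disjoint_iff_inter_eq_empty, not_exists, not_and, not_le]

lemma innerEdges_sdiff_innerEdges_sdiff (A X : Finset V) :
    innerEdges G A \ innerEdges G (A \ X) = {e ∈ innerEdges G A | ∃ v ∈ e, v ∈ X} := by
  ext e
  simp only [innerEdges, mem_filter, mem_sdiff]
  grind

lemma card_filter_mem_innerEdges {v : V} {A : Finset V} (hv : v ∈ A) :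
    #{e ∈ innerEdges G A | v ∈ e} = degIn G v A := by
  rw [degIn, ← card_image_of_injective (A.filter (G.Adj v)) (f := fun u => s(v, u))
    fun _ _ h => Sym2.congr_right.1 h]
  apply congrArg card
  ext e
  induction e using Sym2.ind with
  | _ a b =>
    simp only [innerEdges, mem_filter, SimpleGraph.mem_edgeFinset, SimpleGraph.mem_edgeSet,
      Sym2.mem_iff, forall_eq_or_imp, forall_eq, mem_image, Sym2.eq, Sym2.rel_iff',
      Prod.mk.injEq, Prod.swap_prod_mk]
    grind [SimpleGraph.adj_comm]

lemma marginalDensity_singleton {v : V} {W : Finset V} (hv : v ∈ W) :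
    marginalDensity (edgeCount G) {v} (W \ {v}) = degIn G v W := by
  have h := innerEdges_mono G (sdiff_subset (s := W) (t := {v}))
  rw [marginalDensity_sdiff_self (singleton_subset_iff.2 hv), card_singleton, Nat.cast_one,
    div_one, edgeCount, edgeCount, ← Nat.cast_sub (card_le_card h), ← card_sdiff_of_subset h,
    innerEdges_sdiff_innerEdges_sdiff]
  simp only [mem_singleton, exists_eq_right]
  rw [card_filter_mem_innerEdges G hv]

lemma card_mul_le_card_innerEdges_sdiff {X A : Finset V} {m : ℕ} (hXA : X ⊆ A)
    (h : ∀ v ∈ X, m ≤ degIn G v A) :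
    #X * m ≤ #(innerEdges G A \ innerEdges G (A \ X)) * 2 := by
  apply card_mul_le_card_mul (· ∈ ·)
  · intro v hv
    rw [bipartiteAbove, innerEdges_sdiff_innerEdges_sdiff, filter_filter]
    calc m ≤ degIn G v A := h v hv
      _ = #{e ∈ innerEdges G A | v ∈ e} := (card_filter_mem_innerEdges G (hXA hv)).symm
      _ = _ := congrArg card (filter_congr fun _ _ => ⟨fun he => ⟨⟨v, he, hv⟩, he⟩, And.right⟩)
  · intro e _
    induction e using Sym2.ind with
    | _ a b =>
      refine (card_le_card (t := {a, b}) fun v hv => ?_).trans card_le_two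
      simp only [bipartiteBelow, mem_filter, Sym2.mem_iff] at hv
      rcases hv.2 with rfl | rfl <;> simp

lemma half_le_outDensity {X Y : Finset V} {m : ℕ} (hYX : Y ⊂ X)
    (h : ∀ v ∈ X \ Y, m ≤ degIn G v X) : (m : ℚ) / 2 ≤ outDensity G X Y := by
  have hcount := card_mul_le_card_innerEdges_sdiff G sdiff_subset h
  rw [Finset.sdiff_sdiff_eq_self hYX.subset] at hcount
  rw [outDensity, margEdges_sdiff, union_eq_left.2 hYX.subset,
    le_div_iff₀ (by exact_mod_cast card_pos.2 (sdiff_nonempty.2 hYX.not_subset))]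
  have : (#(X \ Y) * m : ℚ) ≤ #(innerEdges G X \ innerEdges G Y) * 2 := by exact_mod_cast hcount
  linarith

end Graph

section Cores

variable [DecidableEq V] (G : SimpleGraph V) [DecidableRel G.Adj]

lemma degIn_mono (v : V) {U W : Finset V} (h : U ⊆ W) : degIn G v U ≤ degIn G v W :=
  card_le_card (filter_subset_filter _ h)

lemma exists_isKCore [Fintype V] (κ : ℕ) : ∃ M, IsKCore G κ M := by
  have hclosed : SupClosed {D : Finset V | ∀ v ∈ D, κ ≤ degIn G v D} := by
    intro A hA B hB v hv
    rcases mem_union.1 hv with hvA | hvB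
    · exact (hA v hvA).trans (degIn_mono G v subset_union_left)
    · exact (hB v hvB).trans (degIn_mono G v subset_union_right)
  let 𝓓 := (univ : Finset (Finset V)).filter fun D => ∀ v ∈ D, κ ≤ degIn G v D
  refine ⟨𝓓.sup id, hclosed.finsetSup_mem ⟨∅, by simp [𝓓]⟩ fun D hD => (mem_filter.1 hD).2,
    fun D hD => le_sup (f := id) (mem_filter.2 ⟨mem_univ D, hD⟩)⟩

lemma IsKCore.le_degIn_of_subset {m κ : ℕ} {M N : Finset V} (hM : IsKCore G m M)
    (hN : IsKCore G κ N) (hNM : N ⊆ M) : ∀ v ∈ N, m ≤ degIn G v N := by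
  rcases le_or_gt m κ with hmκ | hκm
  · exact fun v hv => hmκ.trans (hN.1 v hv)
  · obtain rfl : N = M := hNM.antisymm (hN.2 M fun v hv => hκm.le.trans (hM.1 v hv))
    exact hM.1

end Cores

lemma chain_mono {A : ℕ → Finset V} {k : ℕ} (h : ∀ i j, i < j → j ≤ k → A i ⊂ A j) {i j : ℕ}
    (hij : i ≤ j) (hj : j ≤ k) : A i ⊆ A j := by
  obtain rfl | hlt := hij.eq_or_lt
  exacts [subset_rfl, (h i j hlt hj).subset]

lemma one_le_and_le_of_first_index [Fintype V] {A : ℕ → Finset V} {k i j : ℕ} (h0 : A 0 = ∅)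
    (hk : A k = univ) (hi : 1 ≤ i) (hiV : i ≤ Fintype.card V) (hj : i ≤ #(A j))
    (hj' : ∀ x < j, #(A x) < i) : 1 ≤ j ∧ j ≤ k := by
  constructor
  · by_contra h
    obtain rfl : j = 0 := by omega
    rw [h0, card_empty] at hj
    omega
  · by_contra h
    have := hj' k (by omega)
    rw [hk, card_univ] at this
    omega

lemma le_degIn_of_locallyDense_chain [Fintype V] [DecidableEq V] (G : SimpleGraph V)
    [DecidableRel G.Adj] {k j : ℕ} {B : ℕ → Finset V}
    (hBchain : ∀ i j, i < j → j ≤ k → B i ⊂ B j)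
    (hBall : ∀ W : Finset V, LocallyDense G W ↔ ∃ i ≤ k, W = B i) (hj : 1 ≤ j) (hjk : j ≤ k)
    {v : V} (hv : v ∈ B j) : outDensity G (B j) (B (j - 1)) ≤ degIn G v (B j) := by
  have hdense : ∀ i ≤ k, IsLocallyDense (edgeCount G) (B i) := fun i hi =>
    (locallyDense_iff_isLocallyDense G _).1 ((hBall _).2 ⟨i, hi, rfl⟩)
  have hgap : ∀ U, B (j - 1) ⊂ U → U ⊂ B j → ¬ IsLocallyDense (edgeCount G) U := by
    intro U hlow hhigh hU
    obtain ⟨y, hy, rfl⟩ := (hBall U).1 ((locallyDense_iff_isLocallyDense G U).2 hU)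
    rcases le_or_gt y (j - 1) with hyj | hyj
    · exact hlow.not_subset (chain_mono hBchain hyj (by omega))
    · exact hhigh.not_subset (chain_mono hBchain (by omega) hy)
  rw [outDensity_eq_marginalDensity, ← marginalDensity_singleton G hv]
  exact marginalDensity_le_of_isLocallyDense (isSupermodular_edgeCount G) (hdense _ (by omega))
    (hdense j hjk) (hBchain _ _ (by omega) hjk) hgap (singleton_subset_iff.2 hv)
    (singleton_nonempty v)

theorem core_profile_two_approx [Fintype V] [DecidableEq V] (G : SimpleGraph V) [DecidableRel G.Adj]
    (n : ℕ) (hn : n = Fintype.card V)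
    (k : ℕ) (B : ℕ → Finset V) (hB0 : B 0 = ∅) (hBk : B k = Finset.univ)
    (hBchain : ∀ i j, i < j → j ≤ k → B i ⊂ B j)
    (hBall : ∀ W : Finset V, LocallyDense G W ↔ ∃ i ≤ k, W = B i)
    (l : ℕ) (C : ℕ → Finset V) (hC0 : C 0 = ∅) (hCl : C l = Finset.univ)
    (hCchain : ∀ s t, s < t → t ≤ l → C s ⊂ C t)
    (hcore : ∀ t, 1 ≤ t → t ≤ l → ∃ κ : ℕ, IsKCore G κ (C t))
    (hallcores : ∀ (X : Finset V) (κ : ℕ), IsKCore G κ X → ∃ t ≤ l, X = C t)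
    (i : ℕ) (hi1 : 1 ≤ i) (hin : i ≤ n)
    (jB : ℕ) (hjB1 : i ≤ (B jB).card) (hjB2 : ∀ x < jB, (B x).card < i)
    (jC : ℕ) (hjC1 : i ≤ (C jC).card) (hjC2 : ∀ x < jC, (C x).card < i) :
    outDensity G (B jB) (B (jB - 1)) / 2 ≤ outDensity G (C jC) (C (jC - 1)) := by
  subst hn
  obtain ⟨hjB, hjBk⟩ := one_le_and_le_of_first_index hB0 hBk hi1 hin hjB1 hjB2
  obtain ⟨hjC, hjCl⟩ := one_le_and_le_of_first_index hC0 hCl hi1 hin hjC1 hjC2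
  set m := ⌈outDensity G (B jB) (B (jB - 1))⌉₊
  obtain ⟨M, hM⟩ := exists_isKCore G m
  obtain ⟨t, htl, rfl⟩ := hallcores M m hM
  have hBM : B jB ⊆ C t := hM.2 _ fun v hv =>
    Nat.ceil_le.2 (le_degIn_of_locallyDense_chain G hBchain hBall hjB hjBk hv)
  have hjCt : jC ≤ t := by
    by_contra h
    exact (hjC2 t (by omega)).not_ge (hjB1.trans (card_le_card hBM))
  obtain ⟨κ, hκ⟩ := hcore jC hjC hjCl
  have hdeg := hM.le_degIn_of_subset G hκ (chain_mono hCchain hjCt htl)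
  calc outDensity G (B jB) (B (jB - 1)) / 2 ≤ m / 2 := by gcongr; exact Nat.le_ceil _
    _ ≤ outDensity G (C jC) (C (jC - 1)) :=
      half_le_outDensity G (hCchain _ _ (by omega) hjCl) fun v hv => hdeg v (mem_sdiff.1 hv).1
end
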